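/- arXiv:0709.0071 — 2 statements merged into one kernel-verified Lean document; each statement's English description precedes it below -/
import Mathlib

section
/- (Covariance, inversion case, n = m = 1) For M > 0 an integer (or positive real), τ ∈ ℂ with Im τ > 0, z ∈ ℂ, and x ∈ ℝ: (1/i)^(1/2) M^(1/2) ∫_ℝ exp(πi M (y²τ + 2yz)) exp(−2πi M y x) dy = τ^(−1/2) exp(−πi M (z² + x² − 2zx)/τ), i.e., the Fourier-type transform of the Gaussian F^(M)_{τ,z} equals τ^(−1/2) exp(−πiMz²/τ) F^(M)_{−1/τ, z/τ}(x). -/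
/-!
The integrand is the Gaussian `exp (πiM (τy² + 2(z - x)y))`, whose integral is the classical
`(i / (Mτ))^(1/2) exp (-πiM (z - x)² / τ)`. What remains is the identity of principal square roots
`(1/i)^(1/2) M^(1/2) (i / (Mτ))^(1/2) = τ^(-1/2)`: the arguments of `M`, `-i` and `i / τ` add up
without leaving `(-π, π]`, because `i / τ` lies in the right half-plane when `τ` lies in the upper one.
-/

open Complex Real

namespace Complex

theorem ne_zero_of_im_pos {s : ℂ} (hs : 0 < s.im) : s ≠ 0 :=
  fun h => by simp [h] at hs

theorem mul_cpow_of_arg_add_mem_Ioc {a b : ℂ} (ha : a ≠ 0) (hb : b ≠ 0)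
    (hab : arg a + arg b ∈ Set.Ioc (-π) π) (s : ℂ) : (a * b) ^ s = a ^ s * b ^ s := by
  rw [cpow_def_of_ne_zero (mul_ne_zero ha hb), cpow_def_of_ne_zero ha, cpow_def_of_ne_zero hb,
    log_mul ha hb hab, add_mul, exp_add]

theorem ofReal_mul_cpow {r : ℝ} (hr : 0 < r) {x : ℂ} (hx : x ≠ 0) (s : ℂ) :
    ((r : ℂ) * x) ^ s = (r : ℂ) ^ s * x ^ s := by
  refine mul_cpow_of_arg_add_mem_Ioc (ofReal_ne_zero.mpr hr.ne') hx ?_ s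
  rw [arg_ofReal_of_nonneg hr.le, zero_add]
  exact ⟨neg_pi_lt_arg x, arg_le_pi x⟩

theorem neg_I_mul_cpow_of_re_pos {w : ℂ} (hw : 0 < w.re) (s : ℂ) :
    (-I * w) ^ s = (-I) ^ s * w ^ s := by
  have hw0 : w ≠ 0 := ne_zero_of_re_pos hw
  have hargw := abs_lt.mp (abs_arg_lt_pi_div_two_iff.mpr (Or.inl hw))
  refine mul_cpow_of_arg_add_mem_Ioc (neg_ne_zero.mpr I_ne_zero) hw0 ?_ s
  rw [arg_neg_I]
  constructor <;> linarith [pi_pos]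

theorem re_I_div_pos_of_im_pos {τ : ℂ} (hτ : 0 < τ.im) : 0 < (I / τ).re := by
  have hτ0 : τ ≠ 0 := ne_zero_of_im_pos hτ
  simpa [div_re] using div_pos hτ (normSq_pos.mpr hτ0)

theorem one_div_I_cpow_mul_ofReal_cpow_mul_cpow {M : ℝ} (hM : 0 < M) {τ : ℂ} (hτ : 0 < τ.im)
    (s : ℂ) : (1 / I) ^ s * (M : ℂ) ^ s * (I / (M * τ)) ^ s = τ ^ (-s) := by
  have hτ0 : τ ≠ 0 := ne_zero_of_im_pos hτ
  have hM0 : (M : ℂ) ≠ 0 := ofReal_ne_zero.mpr hM.ne'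
  have hMI : (M : ℂ) * (I / (M * τ)) = I / τ := by field_simp
  have hIτ : -I * (I / τ) = τ⁻¹ := by field_simp; simp
  have hargτ : arg τ ≠ π := (arg_lt_pi_iff.mpr (Or.inr hτ.ne')).ne
  rw [mul_assoc, ← ofReal_mul_cpow hM (div_ne_zero I_ne_zero (mul_ne_zero hM0 hτ0)), hMI,
    one_div, inv_I, ← neg_I_mul_cpow_of_re_pos (re_I_div_pos_of_im_pos hτ), hIτ,
    inv_cpow _ _ hargτ, cpow_neg]

theorem integral_cexp_pi_I_mul_quadratic {τ : ℂ} (hτ : 0 < τ.im) (w : ℂ) :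
    ∫ y : ℝ, cexp (π * I * ((y : ℂ) ^ 2 * τ + 2 * y * w)) =
      (I / τ) ^ (1 / 2 : ℂ) * cexp (-π * I * w ^ 2 / τ) := by
  have hτ0 : τ ≠ 0 := ne_zero_of_im_pos hτ
  have hb : (π * I * τ).re < 0 := by simpa using mul_pos pi_pos hτ
  have hquad : ∀ y : ℝ, π * I * ((y : ℂ) ^ 2 * τ + 2 * y * w) =
      π * I * τ * (y : ℂ) ^ 2 + 2 * π * I * w * y + 0 := fun y => by ring
  simp_rw [hquad]
  rw [integral_cexp_quadratic hb]
  congr 2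
  · field_simp
    rw [I_sq]
  · field_simp
    ring

end Complex

/-- Covariance relation, inversion case (`n = m = 1`): the Fourier-type transform of
the Gaussian `F^(M)_{τ,z}(y) = exp(πiM(y²τ + 2yz))` satisfies
`(1/i)^(1/2) M^(1/2) ∫_ℝ F^(M)_{τ,z}(y) e^(−2πiMyx) dy
  = τ^(−1/2) exp(−πiM(z² + x² − 2zx)/τ)`. -/
theorem covariance_inversion (M : ℝ) (hM : 0 < M) (τ z : ℂ) (hτ : 0 < τ.im) (x : ℝ) :
    (1 / Complex.I) ^ ((1 / 2 : ℂ)) * (M : ℂ) ^ ((1 / 2 : ℂ)) *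
        ∫ y : ℝ, Complex.exp ((Real.pi : ℂ) * Complex.I * (M : ℂ) *
            ((y : ℂ) ^ 2 * τ + 2 * (y : ℂ) * z)) *
          Complex.exp (-2 * (Real.pi : ℂ) * Complex.I * (M : ℂ) * (y : ℂ) * (x : ℂ)) =
      τ ^ (-(1 / 2 : ℂ)) *
        Complex.exp (-(Real.pi : ℂ) * Complex.I * (M : ℂ) *
          (z ^ 2 + (x : ℂ) ^ 2 - 2 * z * (x : ℂ)) / τ) := by
  have hMτ : 0 < ((M : ℂ) * τ).im := by simpa using mul_pos hM hτ
  have hintegrand : ∀ y : ℝ,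
      cexp (π * I * M * ((y : ℂ) ^ 2 * τ + 2 * y * z)) * cexp (-2 * π * I * M * y * x) =
        cexp (π * I * ((y : ℂ) ^ 2 * (M * τ) + 2 * y * (M * (z - x)))) := fun y => by
    rw [← Complex.exp_add]
    ring_nf
  simp_rw [hintegrand]
  rw [integral_cexp_pi_I_mul_quadratic hMτ, ← mul_assoc,
    one_div_I_cpow_mul_ofReal_cpow_mul_cpow hM hτ]
  congr 2
  field_simp
  ring
end

section
/- The theta series Θ_M(Ω,Z) = Σ_{ξ ∈ ℤ^(m×n)} exp(πi·tr(M(ξΩξᵀ + 2ξZᵀ))) converges absolutely for every Ω ∈ ℍ_n and Z ∈ ℂ^(m×n), when M is a symmetric positive definite real m×m matrix. -/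
/-!
Only the imaginary parts matter: with `A = ξ` viewed as a real matrix, `Y = Im Ω` and `W = Im Z`,
the absolute value of the `ξ`-th term is `exp (-π (tr (M A Y Aᵀ) + 2 tr (M A Wᵀ)))`. Writing
`M = R²` and `Y = S²` with `R`, `S` invertible square roots, the quadratic part is `‖R A S‖²` in
the Frobenius norm, which is at least `c ‖A‖²` for some `c > 0`; by Cauchy–Schwarz the linear
part is `O(‖A‖)`. Hence the terms are dominated by a multiple of `exp (-c' ‖ξ‖²)`, a product of
one-dimensional Gaussians over the entries of `ξ`, which is summable over `ℤ^(m×n)`.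
-/

open Matrix Complex

theorem summable_pi_prod_of_nonneg {β : Type*} {g : β → ℝ} (hg0 : 0 ≤ g) (hg : Summable g)
    (ι : Type*) [Fintype ι] : Summable fun x : ι → β => ∏ i, g (x i) := by
  suffices h : ∀ k, Summable fun x : Fin k → β => ∏ i, g (x i) by
    let e := Fintype.equivFin ι
    rw [← (Equiv.piCongrLeft' (fun _ => β) e).symm.summable_iff]
    convert h (Fintype.card ι) using 2 with x
    exact Fintype.prod_equiv e _ _ fun i => by simp
  intro k
  induction k with
  | zero => exact Summable.of_finite
  | succ k ih =>
    rw [← (Fin.consEquiv fun _ => β).summable_iff]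
    convert hg.mul_of_nonneg ih hg0 (fun x => Finset.prod_nonneg fun i _ => hg0 _) using 2 with x
    simp [Fin.consEquiv, Fin.prod_univ_succ]

theorem summable_exp_neg_mul_int_sq {t : ℝ} (ht : 0 < t) :
    Summable fun a : ℤ => Real.exp (-t * a ^ 2) := by
  refine (summable_pow_mul_jacobiTheta₂_term_bound 0 (div_pos ht Real.pi_pos) 0).congr
    fun a => ?_
  field_simp
  simp

namespace Matrix

section ImaginaryPart

variable {l m n : Type*} [Fintype m]

theorem map_im_ofReal_mul (P : Matrix l m ℝ) (N : Matrix m n ℂ) :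
    (P.map ofReal * N).map im = P * N.map im := by
  ext i j
  simp [mul_apply, im_sum]

theorem map_im_mul_ofReal (N : Matrix l m ℂ) (P : Matrix m n ℝ) :
    (N * P.map ofReal).map im = N.map im * P := by
  ext i j
  simp [mul_apply, im_sum]

theorem norm_exp_pi_mul_I_mul_trace (M : Matrix m m ℝ) (X : Matrix m m ℂ) :
    ‖cexp (Real.pi * I * trace (M.map ofReal * X))‖ =
      Real.exp (-Real.pi * trace (M * X.map im)) := by
  rw [norm_exp, mul_right_comm, mul_I_re, im_ofReal_mul, ← map_im_ofReal_mul,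
    ← coe_imAddGroupHom, AddMonoidHom.map_trace, neg_mul]

theorem map_im_theta_exponent [Fintype n] (A : Matrix l n ℝ) (Ω : Matrix n n ℂ)
    (Z : Matrix l n ℂ) :
    (A.map ofReal * Ω * (A.map ofReal)ᵀ + 2 • (A.map ofReal * Zᵀ)).map im =
      A * Ω.map im * Aᵀ + 2 • (A * (Z.map im)ᵀ) := by
  rw [Matrix.map_add _ add_im, Matrix.map_smul _ _ fun z => by simp, ← transpose_map,
    map_im_mul_ofReal, map_im_ofReal_mul, map_im_ofReal_mul, transpose_map]

end ImaginaryPart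

open scoped MatrixOrder in
theorem PosDef.exists_isUnit_isSymm_mul_self_eq {m : Type*} [Fintype m] [DecidableEq m]
    {M : Matrix m m ℝ} (hM : M.PosDef) : ∃ R : Matrix m m ℝ, IsUnit R ∧ R.IsSymm ∧ R * R = M :=
  ⟨CFC.sqrt M, CFC.isUnit_sqrt_iff_isStrictlyPositive.mpr hM.isStrictlyPositive,
    isHermitian_iff_isSymm.mp (CFC.sqrt_nonneg M).posSemidef.isHermitian,
    CFC.sqrt_mul_sqrt_self M hM.posSemidef.nonneg⟩

section Frobenius

attribute [local instance] frobeniusNormedAddCommGroup frobeniusNormedSpace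

variable {m n : Type*} [Fintype m] [Fintype n]

theorem frobenius_norm_sq_eq_sum_sq (A : Matrix m n ℝ) : ‖A‖ ^ 2 = ∑ i, ∑ j, A i j ^ 2 := by
  rw [frobenius_norm_def, ← Real.rpow_natCast, ← Real.rpow_mul (by positivity)]
  norm_num

theorem trace_mul_transpose_self_eq_frobenius_norm_sq (A : Matrix m n ℝ) : trace (A * Aᵀ) = ‖A‖ ^ 2 := by
  rw [frobenius_norm_sq_eq_sum_sq]
  simp [trace, mul_apply, sq]

theorem abs_trace_mul_transpose_le_frobenius_norm_mul (P Q : Matrix m n ℝ) : |trace (P * Qᵀ)| ≤ ‖P‖ * ‖Q‖ := by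
  refine abs_le_of_sq_le_sq ?_ (by positivity)
  have h : trace (P * Qᵀ) = ∑ p : m × n, P p.1 p.2 * Q p.1 p.2 := by
    simp [trace, mul_apply, Fintype.sum_prod_type]
  rw [h, mul_pow, frobenius_norm_sq_eq_sum_sq, frobenius_norm_sq_eq_sum_sq,
    ← Fintype.sum_prod_type', ← Fintype.sum_prod_type']
  exact Finset.sum_mul_sq_le_sq_mul_sq _ _ _

theorem summable_exp_neg_mul_frobenius_norm_sq {t : ℝ} (ht : 0 < t) :
    Summable fun ξ : Matrix m n ℤ => Real.exp (-t * ‖ξ.map (Int.cast : ℤ → ℝ)‖ ^ 2) := by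
  have hrow := summable_pi_prod_of_nonneg (fun _ => (Real.exp_pos _).le)
    (summable_exp_neg_mul_int_sq ht) n
  refine (summable_pi_prod_of_nonneg
    (fun _ => Finset.prod_nonneg fun _ _ => (Real.exp_pos _).le) hrow m).congr fun ξ => ?_
  simp only [frobenius_norm_sq_eq_sum_sq, Finset.mul_sum, Real.exp_sum]
  rfl

variable [DecidableEq m] [DecidableEq n]

theorem PosDef.exists_pos_mul_frobenius_norm_sq_le_trace {M : Matrix m m ℝ}
    {Y : Matrix n n ℝ} (hM : M.PosDef) (hY : Y.PosDef) :
    ∃ c > 0, ∀ A : Matrix m n ℝ, c * ‖A‖ ^ 2 ≤ trace (M * (A * Y * Aᵀ)) := by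
  obtain ⟨R, ⟨⟨R, R', _, hR'R⟩, rfl⟩, hRt, hRM⟩ := hM.exists_isUnit_isSymm_mul_self_eq
  obtain ⟨S, ⟨⟨S, S', hSS', _⟩, rfl⟩, hSt, hSY⟩ := hY.exists_isUnit_isSymm_mul_self_eq
  simp only at hRt hRM hSt hSY
  set L := ‖R'‖ * ‖S'‖ + 1
  refine ⟨(L ^ 2)⁻¹, by positivity, fun A => ?_⟩
  have htrace : trace (M * (A * Y * Aᵀ)) = ‖R * A * S‖ ^ 2 := by
    rw [← trace_mul_transpose_self_eq_frobenius_norm_sq, ← hRM, ← hSY]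
    simp only [transpose_mul, hRt.eq, hSt.eq, Matrix.mul_assoc]
    rw [trace_mul_comm R]
    simp only [Matrix.mul_assoc]
  have hA : A = R' * (R * A * S) * S' := by
    simp only [← Matrix.mul_assoc, hR'R, Matrix.one_mul]
    rw [Matrix.mul_assoc, hSS', Matrix.mul_one]
  have hnorm : ‖A‖ ≤ L * ‖R * A * S‖ := calc
    ‖A‖ ≤ ‖R'‖ * ‖R * A * S‖ * ‖S'‖ := by
      conv_lhs => rw [hA]
      refine (frobenius_norm_mul _ _).trans ?_
      gcongr
      exact frobenius_norm_mul _ _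
    _ ≤ L * ‖R * A * S‖ := by
      rw [mul_right_comm]
      gcongr
      linarith
  rw [htrace, inv_mul_le_iff₀ (by positivity), ← mul_pow]
  gcongr

theorem PosDef.exists_pos_mul_frobenius_norm_sq_sub_le_trace {M : Matrix m m ℝ}
    {Y : Matrix n n ℝ} (hM : M.PosDef) (hY : Y.PosDef) (W : Matrix m n ℝ) :
    ∃ c > 0, ∃ K, ∀ A : Matrix m n ℝ,
      c * ‖A‖ ^ 2 - K ≤ trace (M * (A * Y * Aᵀ + 2 • (A * Wᵀ))) := by
  obtain ⟨c, hc, hquad⟩ := hM.exists_pos_mul_frobenius_norm_sq_le_trace hY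
  set C := ‖M‖ * ‖W‖
  have hlin (A : Matrix m n ℝ) : |trace (M * (A * Wᵀ))| ≤ C * ‖A‖ := calc
    |trace (M * (A * Wᵀ))| ≤ ‖M * A‖ * ‖W‖ := by
      rw [← Matrix.mul_assoc]
      exact abs_trace_mul_transpose_le_frobenius_norm_mul _ _
    _ ≤ ‖M‖ * ‖A‖ * ‖W‖ := by gcongr; exact frobenius_norm_mul _ _
    _ = C * ‖A‖ := by ring
  refine ⟨c / 2, by positivity, 2 * C ^ 2 / c, fun A => ?_⟩
  rw [Matrix.mul_add, trace_add, Matrix.mul_smul, trace_smul, nsmul_eq_mul, Nat.cast_ofNat]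
  have hq := hquad A
  have hl := neg_abs_le (trace (M * (A * Wᵀ))) |>.trans' (neg_le_neg (hlin A))
  have hsq : c * ‖A‖ ^ 2 - 2 * (C * ‖A‖) - (c / 2 * ‖A‖ ^ 2 - 2 * C ^ 2 / c) =
      (c * ‖A‖ - 2 * C) ^ 2 / (2 * c) := by
    field_simp
    ring
  have : 0 ≤ (c * ‖A‖ - 2 * C) ^ 2 / (2 * c) := by positivity
  linarith

end Frobenius

end Matrix

theorem theta_series_converges_absolutely_general (m n : ℕ)
    (M : Matrix (Fin m) (Fin m) ℝ) (hM : M.PosDef)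
    (Ω : Matrix (Fin n) (Fin n) ℂ) (hIm : (Ω.map Complex.im).PosDef)
    (Z : Matrix (Fin m) (Fin n) ℂ) :
    Summable (fun ξ : Matrix (Fin m) (Fin n) ℤ =>
      ‖Complex.exp ((Real.pi : ℂ) * Complex.I *
        ((M.map Complex.ofReal) *
          (ξ.map (fun a => (a : ℂ)) * Ω * (ξ.map (fun a => (a : ℂ)))ᵀ +
            2 • (ξ.map (fun a => (a : ℂ)) * Zᵀ))).trace)‖) := by
  obtain ⟨c, hc, K, hbound⟩ :=
    hM.exists_pos_mul_frobenius_norm_sq_sub_le_trace hIm (Z.map Complex.im)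
  refine ((summable_exp_neg_mul_frobenius_norm_sq (mul_pos Real.pi_pos hc)).mul_left
    (Real.exp (Real.pi * K))).of_nonneg_of_le (fun _ => norm_nonneg _) fun ξ => ?_
  have hcast : ξ.map (fun a => (a : ℂ)) = (ξ.map (Int.cast : ℤ → ℝ)).map ofReal := by
    ext
    simp
  rw [hcast, norm_exp_pi_mul_I_mul_trace, map_im_theta_exponent, ← Real.exp_add,
    Real.exp_le_exp]
  nlinarith [hbound (ξ.map (Int.cast : ℤ → ℝ)), Real.pi_pos]

/-- The theta series `Θ_M(Ω,Z) = Σ_{ξ ∈ ℤ^(m×n)} exp(πi·tr(M(ξΩξᵀ + 2ξZᵀ)))` converges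
absolutely for `M` symmetric positive definite, `Ω ∈ ℍ_n` and `Z ∈ ℂ^(m×n)`. -/
theorem theta_series_converges_absolutely (m n : ℕ)
    (M : Matrix (Fin m) (Fin m) ℝ) (hM : M.PosDef)
    (Ω : Matrix (Fin n) (Fin n) ℂ) (hΩ : Ω.IsSymm) (hIm : (Ω.map Complex.im).PosDef)
    (Z : Matrix (Fin m) (Fin n) ℂ) :
    Summable (fun ξ : Matrix (Fin m) (Fin n) ℤ =>
      ‖Complex.exp ((Real.pi : ℂ) * Complex.I *
        ((M.map Complex.ofReal) *
          (ξ.map (fun a => (a : ℂ)) * Ω * (ξ.map (fun a => (a : ℂ)))ᵀ +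
            2 • (ξ.map (fun a => (a : ℂ)) * Zᵀ))).trace)‖) :=
  theta_series_converges_absolutely_general m n M hM Ω hIm Z
end
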